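/- arXiv:1601.01985 — 2 statements merged into one kernel-verified Lean document; each statement's English description precedes it below -/
import Mathlib

section
/- Let p : ℤ → LaurentPolynomial ℤ be defined by p n = 1 - (T + T⁻¹ - 2) * (T^n + T^(-n)) (where T denotes the Laurent variable). Then for all integers n and m, p n = p m if and only if n = m or n = -m. -/
open LaurentPolynomial

/-! The factor `T + T⁻¹ - 2` is nonzero and `ℤ[T, T⁻¹]` is a domain, so it cancels, and
`T^n + T^(-n)` determines `n` up to sign by its coefficients. -/

theorem LaurentPolynomial.T_add_T_neg_eq_iff {R : Type*} [Semiring R] [Nontrivial R] {n m : ℤ} :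
    (T n + T (-n) : R[T;T⁻¹]) = T m + T (-m) ↔ n = m ∨ n = -m := by
  refine ⟨fun h => ?_, ?_⟩
  · have coeff_eq (k : ℤ) :
        (T n + T (-n) : R[T;T⁻¹]).coeff k = (T m + T (-m) : R[T;T⁻¹]).coeff k :=
      congrArg (fun f : R[T;T⁻¹] => f.coeff k) h
    -- Compare coefficients at `m`, or at `n` when `m = 0`: in characteristic 2, `T 0 + T 0 = 0`.
    have := coeff_eq (if m = 0 then n else m)
    simp only [AddMonoidAlgebra.coeff_add, Finsupp.add_apply, T_apply] at this
    split_ifs at this <;> first | omega | simp_all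
  · rintro (rfl | rfl)
    · rfl
    · rw [neg_neg, add_comm]

theorem LaurentPolynomial.T_one_add_T_neg_one_sub_two_ne_zero {R : Type*} [Ring R] [Nontrivial R] :
    (T 1 + T (-1) - 2 : R[T;T⁻¹]) ≠ 0 := by
  intro h
  simpa using congrArg (fun f : R[T;T⁻¹] => f.coeff 1) h

/-- The family of symmetrized Alexander polynomials
`p n = 1 - (T + T⁻¹ - 2) * (T^n + T^(-n))` in `ℤ[T, T⁻¹]` satisfies
`p n = p m ↔ n = m ∨ n = -m`. -/
theorem stmt_0 (p : ℤ → LaurentPolynomial ℤ)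
    (hp : ∀ n : ℤ, p n = 1 - (T 1 + T (-1) - 2) * (T n + T (-n))) :
    ∀ n m : ℤ, p n = p m ↔ (n = m ∨ n = -m) := by
  intro n m
  rw [hp, hp, sub_right_inj, mul_right_inj' T_one_add_T_neg_one_sub_two_ne_zero,
    T_add_T_neg_eq_iff]
end

section
/- Let p : ℤ → LaurentPolynomial ℤ be defined by p n = 1 - (T + T⁻¹ - 2) * (T^n + T^(-n)). Then for every integer n, p n is not a unit of the ring LaurentPolynomial ℤ. -/
open LaurentPolynomial

noncomputable def evalNegOne : LaurentPolynomial ℤ →ₐ[ℤ] ℤ :=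
  AddMonoidAlgebra.lift ℤ ℤ ℤ ((Units.coeHom ℤ).comp (zpowersHom ℤˣ (-1)))

lemma evalNegOne_T (n : ℤ) : evalNegOne (T n) = ((-1 : ℤˣ) ^ n : ℤˣ) := by
  rw [evalNegOne, T]
  rw [AddMonoidAlgebra.lift_single]
  simp [zpowersHom_apply]

/-- The Laurent polynomial `p n = 1 - (T + T⁻¹ - 2) * (T^n + T^(-n))` is not a
unit of `ℤ[T, T⁻¹]` for any integer `n`. -/
theorem stmt_1 (p : ℤ → LaurentPolynomial ℤ)
    (hp : ∀ n : ℤ, p n = 1 - (T 1 + T (-1) - 2) * (T n + T (-n))) :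
    ∀ n : ℤ, ¬ IsUnit (p n) := by
  intro n hu
  have h := hu.map evalNegOne
  rw [hp n] at h
  have hval : evalNegOne (1 - (T 1 + T (-1) - 2) * (T n + T (-n)))
      = 1 - ((-1) + (-1) - 2) * (((-1 : ℤˣ) ^ n : ℤˣ) + ((-1 : ℤˣ) ^ (-n) : ℤˣ)) := by
    have h2 : evalNegOne (2 : LaurentPolynomial ℤ) = 2 := map_ofNat _ 2
    simp only [map_sub, map_mul, map_add, map_one, evalNegOne_T, h2]
    norm_num
  rw [hval] at h
  rcases Int.units_eq_one_or ((-1 : ℤˣ) ^ n) with he | he <;>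
    · have he' : ((-1 : ℤˣ) ^ (-n) : ℤˣ) = ((-1 : ℤˣ) ^ n : ℤˣ) := by
        rw [zpow_neg, Int.units_inv_eq_self]
      rw [he', he] at h
      rw [Int.isUnit_iff] at h
      norm_num at h
end
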